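/- For every P ∈ V_w^Γ with P|T = P and every Q ∈ W_w^Γ, one has {P|(1−S), Q} = 0; that is, the coboundary polynomials C_w^Γ are orthogonal to all period polynomials W_w^Γ with respect to the pairing {·,·}. -/

import Mathlib

noncomputable section

open Matrix Polynomial Finset Filter MeasureTheory

abbrev SL2Z := Matrix.SpecialLinearGroup (Fin 2) ℤ

def mc (g : SL2Z) (i j : Fin 2) : ℂ := ((g : Matrix (Fin 2) (Fin 2) ℤ) i j : ℂ)

def Sm : SL2Z := ⟨!![0, -1; 1, 0], by norm_num [Matrix.det_fin_two_of]⟩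
def Tm : SL2Z := ⟨!![1, 1; 0, 1], by norm_num [Matrix.det_fin_two_of]⟩
def Um : SL2Z := Tm * Sm

def negSL (A : SL2Z) : SL2Z := ⟨-A.1, by simp [Matrix.det_neg, A.2]⟩

/-- weight `-w` right action of `g` on polynomials of degree at most `w`:
`(P|g)(X) = (cX+d)^w P((aX+b)/(cX+d))`. -/
def pSlash (w : ℕ) (P : Polynomial ℂ) (g : SL2Z) : Polynomial ℂ :=
  ∑ n ∈ Finset.range (w + 1),
    C (P.coeff n) * (C (mc g 0 0) * X + C (mc g 0 1)) ^ n *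
      (C (mc g 1 0) * X + C (mc g 1 1)) ^ (w - n)

/-- right action of `g` on families `P : Γ₁ → V_w`: `(P|g)(A) = P(Ag⁻¹)|g`. -/
def famSlash (w : ℕ) (P : SL2Z → Polynomial ℂ) (g : SL2Z) : SL2Z → Polynomial ℂ :=
  fun A => pSlash w (P (A * g⁻¹)) g

/-- membership in the induced module `V_w^Γ`. -/
structure MemV (Γ : Subgroup SL2Z) (w : ℕ) (P : SL2Z → Polynomial ℂ) : Prop where
  deg : ∀ A, (P A).degree ≤ (w : ℕ)
  inv : ∀ γ ∈ Γ, ∀ A, P (γ * A) = P A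
  parity : ∀ A, P (negSL A) = (-1 : ℂ) ^ w • P A

/-- the space of period polynomials `W_w^Γ`. -/
def MemW (Γ : Subgroup SL2Z) (w : ℕ) (P : SL2Z → Polynomial ℂ) : Prop :=
  MemV Γ w P ∧ (∀ A, P A + famSlash w P Sm A = 0) ∧
    (∀ A, P A + famSlash w P Um A + famSlash w P (Um * Um) A = 0)

/-- the space of coboundary polynomials `C_w^Γ = {P|(1-S) : P ∈ V_w^Γ, P|T = P}`. -/
def MemC (Γ : Subgroup SL2Z) (w : ℕ) (Q : SL2Z → Polynomial ℂ) : Prop :=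
  ∃ P, MemV Γ w P ∧ (∀ A, famSlash w P Tm A = P A) ∧ ∀ A, Q A = P A - famSlash w P Sm A

def uhp : Set ℂ := {z | 0 < z.im}

/-- the weight `k` slash action on functions. -/
def slashk (k : ℤ) (g : SL2Z) (f : ℂ → ℂ) : ℂ → ℂ := fun z =>
  (mc g 1 0 * z + mc g 1 1) ^ (-k) *
    f ((mc g 0 0 * z + mc g 0 1) / (mc g 1 0 * z + mc g 1 1))

/-- cusp forms of weight `k` for `Γ`. -/
structure IsCuspForm (Γ : Subgroup SL2Z) (k : ℤ) (f : ℂ → ℂ) : Prop where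
  holo : DifferentiableOn ℂ f uhp
  trans : ∀ γ ∈ Γ, ∀ z ∈ uhp, slashk k γ f z = f z
  decay : ∀ A : SL2Z, Tendsto (slashk k A f) (Filter.comap Complex.im atTop) (nhds 0)

/-- the period polynomial `ρ_f(A) = ∫₀^{i∞} (f|A)(t)(t-X)^w dt`, via its coefficients. -/
def rho (k : ℤ) (w : ℕ) (f : ℂ → ℂ) (A : SL2Z) : Polynomial ℂ :=
  ∑ m ∈ Finset.range (w + 1),
    C ((-1 : ℂ) ^ m * (w.choose m : ℂ) * Complex.I ^ (w - m + 1) *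
        ∫ y in Set.Ioi (0 : ℝ), slashk k A f (Complex.I * y) * (y : ℂ) ^ (w - m)) * X ^ m

/-- the pairing `⟨·,·⟩` on `V_w`. -/
def pairV (w : ℕ) (P Q : Polynomial ℂ) : ℂ :=
  ∑ n ∈ Finset.range (w + 1),
    (-1 : ℂ) ^ (w - n) * ((w.choose n : ℂ))⁻¹ * P.coeff n * Q.coeff (w - n)

/-- the pairing `⟪·,·⟫` on `V_w^Γ`, w.r.t. a set `Rt` of coset representatives for `Γ\Γ₁`. -/
def pairG (Γ : Subgroup SL2Z) (w : ℕ) (Rt : Finset SL2Z) (P Q : SL2Z → Polynomial ℂ) : ℂ :=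
  ((Γ.index : ℂ))⁻¹ * ∑ A ∈ Rt, pairV w (P A) (Q A)

/-- the pairing `{P,Q} = ⟪P|(T-T⁻¹),Q⟫`. -/
def brk (Γ : Subgroup SL2Z) (w : ℕ) (Rt : Finset SL2Z) (P Q : SL2Z → Polynomial ℂ) : ℂ :=
  pairG Γ w Rt (fun A => famSlash w P Tm A - famSlash w P Tm⁻¹ A) Q

/-- `Rt` is a set of representatives for the right cosets `Γ\Γ₁`. -/
def IsTransversal (Γ : Subgroup SL2Z) (Rt : Finset SL2Z) : Prop :=
  Subgroup.IsComplement (Γ : Set SL2Z) (Rt : Set SL2Z)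

/-- the standard fundamental domain for `SL₂(ℤ)` in the upper half plane. -/
def fundDom : Set ℂ := {z | 0 < z.im ∧ 1 ≤ ‖z‖ ∧ |z.re| ≤ 1 / 2}

/-- the Petersson product w.r.t. a set `Rt` of coset representatives for `Γ\Γ₁`. -/
def petersson (Γ : Subgroup SL2Z) (k : ℤ) (Rt : Finset SL2Z) (f g : ℂ → ℂ) : ℂ :=
  ((Γ.index : ℂ))⁻¹ * ∑ A ∈ Rt, ∫ z in fundDom,
    slashk k A f z * (starRingEnd ℂ) (slashk k A g z) * (z.im : ℂ) ^ (k - 2)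

def Ck (k : ℤ) : ℂ := -(2 * Complex.I) ^ (k - 1)

/-- conjugation of `A` by `ε = [[-1,0],[0,1]]`. -/
def epsConj (A : SL2Z) : SL2Z :=
  ⟨!![A.1 0 0, -A.1 0 1; -A.1 1 0, A.1 1 1], by
    have h := A.2
    rw [Matrix.det_fin_two] at h
    rw [Matrix.det_fin_two_of]
    linear_combination h⟩

/-- the involution `(P|ε)(A)(X) = P(εAε)(-X)` of `V_w^Γ`. -/
def epsAct (w : ℕ) (P : SL2Z → Polynomial ℂ) : SL2Z → Polynomial ℂ :=
  fun A => (P (epsConj A)).comp (-X)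

/-- `P^± = (P ± P|ε)/2`, where `s = ±1`. -/
def pm (w : ℕ) (s : ℂ) (P : SL2Z → Polynomial ℂ) : SL2Z → Polynomial ℂ :=
  fun A => (2 : ℂ)⁻¹ • (P A + s • epsAct w P A)

/-- coefficientwise complex conjugation. -/
def conjFam (P : SL2Z → Polynomial ℂ) : SL2Z → Polynomial ℂ :=
  fun A => (P A).map (starRingEnd ℂ)

/-- the periods `r_{A,n}(f)`, extracted from any `P ∈ V_w^Γ` by
`P(A)(X) = Σₙ (-1)^{w-n} binom(w,n) r_{A,n} X^{w-n}`. -/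
def per (w : ℕ) (P : SL2Z → Polynomial ℂ) (A : SL2Z) (n : ℕ) : ℂ :=
  (-1 : ℂ) ^ (w - n) * ((w.choose n : ℂ))⁻¹ * (P A).coeff (w - n)

/-!
The pairing `⟨·,·⟩` on `V_w` is `SL₂(ℤ)`-invariant: on `w`-th powers of linear forms it is the
`w`-th power of a determinant, and such powers span `V_w`. Summing over a transversal makes
`⟪·,·⟫` invariant under `Γ₁` on `V_w^Γ`, so a slash can be moved to the other side as its inverse.
As `P|T = P`, `{P|(1-S), Q} = ⟪P|S, Q|T⟫ - ⟪P|S, Q|T⁻¹⟫`, and the period relations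
`Q|S = -Q` and `Q|T⁻¹ = Q + Q|U` (from `U² = ST⁻¹`) make both terms vanish.
-/

theorem eq_of_forall_linear_pow_eq {K M : Type*} [Field K] [CharZero K] [AddCommGroup M]
    [Module K M] {w : ℕ} (F G : K[X] →ₗ[K] M)
    (h : ∀ α β : K, F ((C α * X + C β) ^ w) = G ((C α * X + C β) ^ w))
    {P : K[X]} (hP : P.natDegree ≤ w) : F P = G P := by
  suffices hX : ∀ n ≤ w, (F - G) (X ^ n) = 0 by
    rw [← sub_eq_zero, ← LinearMap.sub_apply, P.as_sum_range' (w + 1) (by omega), map_sum]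
    refine Finset.sum_eq_zero fun n hn => ?_
    rw [← smul_X_eq_monomial, map_smul, hX n (by simpa [Nat.lt_succ_iff] using hn), smul_zero]
  intro n hn
  rw [← Module.forall_dual_apply_eq_zero_iff K]
  intro φ
  set R : K[X] := ∑ m ∈ range (w + 1), C (w.choose m * φ ((F - G) (X ^ m))) * X ^ m
  -- `R(a)` is `φ ((F - G) ((a X + 1) ^ w))`, so `R` vanishes identically.
  have hR : R = 0 := Polynomial.funext fun a => by
    have hFG : φ ((F - G) ((C a * X + C 1) ^ w)) = 0 := by
      rw [LinearMap.sub_apply, h, sub_self, map_zero]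
    rw [add_pow, map_sum, map_sum] at hFG
    simp only [R, eval_finsetSum, eval_zero, ← hFG]
    refine Finset.sum_congr rfl fun m _ => ?_
    have hterm : (C a * X) ^ m * C 1 ^ (w - m) * (w.choose m : K[X]) =
        (a ^ m * w.choose m) • X ^ m := by
      simp only [smul_eq_C_mul, mul_pow, ← C_pow, map_one, one_pow, mul_one, C_mul, map_natCast]
      ring
    rw [hterm, map_smul, map_smul, smul_eq_mul]
    simp only [eval_mul, eval_C, eval_X_pow]
    ring
  have hcoeff := congrArg (coeff · n) hR
  simp only [R, finsetSum_coeff, coeff_C_mul_X_pow, coeff_zero] at hcoeff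
  rw [Finset.sum_eq_single n (fun m _ hm => if_neg hm.symm) (by simp; omega), if_pos rfl] at hcoeff
  exact (mul_eq_zero.mp hcoeff).resolve_left (by exact_mod_cast (Nat.choose_pos hn).ne')

lemma mc_mul (g h : SL2Z) (i j : Fin 2) :
    mc (g * h) i j = mc g i 0 * mc h 0 j + mc g i 1 * mc h 1 j := by
  simp [mc, Matrix.mul_apply, Fin.sum_univ_two]

lemma mc_one (i j : Fin 2) : mc 1 i j = if i = j then 1 else 0 := by
  simp [mc, Matrix.one_apply, apply_ite]

lemma mc_neg (g : SL2Z) (i j : Fin 2) : mc (-g) i j = -mc g i j := by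
  simp [mc]

lemma mc_det (g : SL2Z) : mc g 0 0 * mc g 1 1 - mc g 0 1 * mc g 1 0 = 1 := by
  have h := congrArg (fun x : ℤ => (x : ℂ)) g.2
  simp only [Matrix.det_fin_two, Int.cast_sub, Int.cast_mul, Int.cast_one] at h
  exact h

lemma coeff_linear_pow (α β : ℂ) {w n : ℕ} (hn : n ≤ w) :
    ((C α * X + C β) ^ w).coeff n = w.choose n * α ^ n * β ^ (w - n) := by
  have hterm : ∀ m, (C α * X) ^ m * C β ^ (w - m) * (w.choose m : ℂ[X]) =
      C (w.choose m * α ^ m * β ^ (w - m)) * X ^ m := fun m => by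
    simp only [mul_pow, C_mul, C_pow, map_natCast]; ring
  simp only [add_pow, hterm, finsetSum_coeff, coeff_C_mul_X_pow]
  rw [Finset.sum_eq_single n (fun m _ hm => if_neg hm.symm) (by simp; omega), if_pos rfl]

lemma natDegree_pSlash_le (w : ℕ) (P : ℂ[X]) (g : SL2Z) : (pSlash w P g).natDegree ≤ w := by
  refine natDegree_sum_le_of_forall_le _ _ fun n hn => ?_
  have hn : n ≤ w := by simpa [Nat.lt_succ_iff] using hn
  calc _ ≤ 0 + n * 1 + (w - n) * 1 :=
        natDegree_mul_le_of_le (natDegree_mul_le_of_le (natDegree_C _).le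
          (natDegree_pow_le_of_le n natDegree_linear_le))
          (natDegree_pow_le_of_le (w - n) natDegree_linear_le)
    _ = w := by omega

def slashLinear (w : ℕ) (g : SL2Z) : ℂ[X] →ₗ[ℂ] ℂ[X] where
  toFun P := pSlash w P g
  map_add' P Q := by simp only [pSlash, coeff_add, C_add, add_mul, Finset.sum_add_distrib]
  map_smul' c P := by
    rw [RingHom.id_apply, pSlash, pSlash, Finset.smul_sum]
    refine Finset.sum_congr rfl fun n _ => ?_
    rw [coeff_smul, smul_eq_mul, C_mul, smul_eq_C_mul]
    ring

@[simp]
lemma slashLinear_apply (w : ℕ) (g : SL2Z) (P : ℂ[X]) : slashLinear w g P = pSlash w P g := rfl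

lemma pSlash_sub (w : ℕ) (P Q : ℂ[X]) (g : SL2Z) :
    pSlash w (P - Q) g = pSlash w P g - pSlash w Q g :=
  map_sub (slashLinear w g) P Q

lemma pSlash_neg (w : ℕ) (P : ℂ[X]) (g : SL2Z) : pSlash w (-P) g = -pSlash w P g :=
  map_neg (slashLinear w g) P

lemma pSlash_smul (w : ℕ) (c : ℂ) (P : ℂ[X]) (g : SL2Z) : pSlash w (c • P) g = c • pSlash w P g :=
  map_smul (slashLinear w g) c P

lemma pSlash_linear_pow (w : ℕ) (α β : ℂ) (g : SL2Z) :
    pSlash w ((C α * X + C β) ^ w) g =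
      (C (α * mc g 0 0 + β * mc g 1 0) * X + C (α * mc g 0 1 + β * mc g 1 1)) ^ w := by
  have hlin : C (α * mc g 0 0 + β * mc g 1 0) * X + C (α * mc g 0 1 + β * mc g 1 1) =
      C α * (C (mc g 0 0) * X + C (mc g 0 1)) + C β * (C (mc g 1 0) * X + C (mc g 1 1)) := by
    simp only [C_add, C_mul]; ring
  rw [hlin, pSlash]
  conv_rhs => rw [add_pow]
  refine Finset.sum_congr rfl fun n hn => ?_
  rw [coeff_linear_pow α β (by simpa [Nat.lt_succ_iff] using hn)]
  simp only [C_mul, C_pow, map_natCast, mul_pow]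
  ring

lemma pSlash_pSlash (w : ℕ) {P : ℂ[X]} (hP : P.natDegree ≤ w) (g h : SL2Z) :
    pSlash w (pSlash w P g) h = pSlash w P (g * h) :=
  eq_of_forall_linear_pow_eq (slashLinear w h ∘ₗ slashLinear w g) (slashLinear w (g * h))
    (fun α β => by
      simp only [LinearMap.comp_apply, slashLinear_apply, pSlash_linear_pow, mc_mul]
      ring_nf) hP

lemma pSlash_one (w : ℕ) {P : ℂ[X]} (hP : P.natDegree ≤ w) : pSlash w P 1 = P :=
  eq_of_forall_linear_pow_eq (slashLinear w 1) LinearMap.id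
    (fun α β => by simp [pSlash_linear_pow, mc_one]) hP

lemma pSlash_neg_one (w : ℕ) {P : ℂ[X]} (hP : P.natDegree ≤ w) :
    pSlash w P (-1) = (-1 : ℂ) ^ w • P := by
  refine eq_of_forall_linear_pow_eq (slashLinear w (-1)) ((-1 : ℂ) ^ w • LinearMap.id)
    (fun α β => ?_) hP
  have hlin : C (α * mc (-1) 0 0 + β * mc (-1) 1 0) * X + C (α * mc (-1) 0 1 + β * mc (-1) 1 1) =
      C (-1) * (C α * X + C β) := by
    simp [mc_neg, mc_one]; ring
  rw [slashLinear_apply, pSlash_linear_pow, hlin, mul_pow, ← C_pow, ← smul_eq_C_mul]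
  rfl

def pairVBilin (w : ℕ) : ℂ[X] →ₗ[ℂ] ℂ[X] →ₗ[ℂ] ℂ :=
  LinearMap.mk₂ ℂ (pairV w)
    (fun P P' Q => by
      simp only [pairV, coeff_add, ← Finset.sum_add_distrib]
      exact Finset.sum_congr rfl fun n _ => by ring)
    (fun c P Q => by
      simp only [pairV, coeff_smul, smul_eq_mul, Finset.mul_sum]
      exact Finset.sum_congr rfl fun n _ => by ring)
    (fun P Q Q' => by
      simp only [pairV, coeff_add, ← Finset.sum_add_distrib]
      exact Finset.sum_congr rfl fun n _ => by ring)
    (fun c P Q => by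
      simp only [pairV, coeff_smul, smul_eq_mul, Finset.mul_sum]
      exact Finset.sum_congr rfl fun n _ => by ring)

@[simp]
lemma pairVBilin_apply (w : ℕ) (P Q : ℂ[X]) : pairVBilin w P Q = pairV w P Q := rfl

lemma pairV_linear_pow (w : ℕ) (α β γ δ : ℂ) :
    pairV w ((C α * X + C β) ^ w) ((C γ * X + C δ) ^ w) = (α * δ - β * γ) ^ w := by
  rw [pairV, sub_eq_add_neg]
  conv_rhs => rw [add_pow]
  refine Finset.sum_congr rfl fun n hn => ?_
  have hn : n ≤ w := by simpa [Nat.lt_succ_iff] using hn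
  have hchoose : (w.choose n : ℂ) ≠ 0 := by exact_mod_cast (Nat.choose_pos hn).ne'
  rw [coeff_linear_pow α β hn, coeff_linear_pow γ δ (Nat.sub_le w n), Nat.choose_symm hn,
    Nat.sub_sub_self hn]
  field_simp
  ring

theorem pairV_pSlash (w : ℕ) {P Q : ℂ[X]} (hP : P.natDegree ≤ w) (hQ : Q.natDegree ≤ w)
    (g : SL2Z) : pairV w (pSlash w P g) (pSlash w Q g) = pairV w P Q := by
  have hpow : ∀ α β γ δ : ℂ,
      pairV w (pSlash w ((C α * X + C β) ^ w) g) (pSlash w ((C γ * X + C δ) ^ w) g) =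
        pairV w ((C α * X + C β) ^ w) ((C γ * X + C δ) ^ w) := fun α β γ δ => by
    rw [pSlash_linear_pow, pSlash_linear_pow, pairV_linear_pow, pairV_linear_pow]
    congr 1
    linear_combination (α * δ - β * γ) * mc_det g
  have hpowQ : ∀ γ δ : ℂ, pairV w (pSlash w P g) (pSlash w ((C γ * X + C δ) ^ w) g) =
      pairV w P ((C γ * X + C δ) ^ w) := fun γ δ =>
    eq_of_forall_linear_pow_eq
      ((pairVBilin w).flip (pSlash w ((C γ * X + C δ) ^ w) g) ∘ₗ slashLinear w g)
      ((pairVBilin w).flip ((C γ * X + C δ) ^ w)) (fun α β => hpow α β γ δ) hP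
  exact eq_of_forall_linear_pow_eq (pairVBilin w (pSlash w P g) ∘ₗ slashLinear w g)
    (pairVBilin w P) hpowQ hQ

section Families

variable {Γ : Subgroup SL2Z} {w : ℕ}

lemma MemV.natDegree_le {P : SL2Z → ℂ[X]} (hP : MemV Γ w P) (A : SL2Z) :
    (P A).natDegree ≤ w :=
  natDegree_le_iff_degree_le.mpr (hP.deg A)

lemma famSlash_famSlash {P : SL2Z → ℂ[X]} (hP : ∀ A, (P A).natDegree ≤ w) (g h : SL2Z) :
    famSlash w (famSlash w P g) h = famSlash w P (g * h) := by
  funext A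
  simp only [famSlash, pSlash_pSlash w (hP _), _root_.mul_inv_rev, mul_assoc]

lemma famSlash_one {P : SL2Z → ℂ[X]} (hP : ∀ A, (P A).natDegree ≤ w) : famSlash w P 1 = P := by
  funext A
  simp only [famSlash, inv_one, mul_one, pSlash_one w (hP A)]

lemma famSlash_famSlash_inv {P : SL2Z → ℂ[X]} (hP : ∀ A, (P A).natDegree ≤ w) (g : SL2Z) :
    famSlash w (famSlash w P g) g⁻¹ = P := by
  rw [famSlash_famSlash hP, mul_inv_cancel, famSlash_one hP]

lemma famSlash_sub (P Q : SL2Z → ℂ[X]) (g : SL2Z) :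
    famSlash w (P - Q) g = famSlash w P g - famSlash w Q g :=
  funext fun _ => pSlash_sub w _ _ g

lemma famSlash_neg (P : SL2Z → ℂ[X]) (g : SL2Z) : famSlash w (-P) g = -famSlash w P g :=
  funext fun _ => pSlash_neg w _ g

lemma MemV.famSlash {P : SL2Z → ℂ[X]} (hP : MemV Γ w P) (g : SL2Z) :
    MemV Γ w (famSlash w P g) where
  deg A := degree_le_of_natDegree_le (natDegree_pSlash_le w _ g)
  inv γ hγ A := by simp only [_root_.famSlash, mul_assoc, hP.inv γ hγ]
  parity A := by
    have hneg : negSL A * g⁻¹ = negSL (A * g⁻¹) := neg_mul A g⁻¹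
    simp only [_root_.famSlash, hneg, hP.parity, pSlash_smul]

lemma famSlash_neg_one {P : SL2Z → ℂ[X]} (hP : MemV Γ w P) : famSlash w P (-1) = P := by
  funext A
  have hneg : A * (-1 : SL2Z)⁻¹ = negSL A := by rw [inv_neg_one, mul_neg_one]; rfl
  rw [famSlash, hneg, hP.parity, pSlash_smul, pSlash_neg_one w (hP.natDegree_le A), smul_smul,
    ← mul_pow, neg_one_mul, neg_neg, one_pow, one_smul]

end Families

theorem Subgroup.IsComplement.sum_mul_right {G M : Type*} [Group G] [AddCommMonoid M]
    {H : Subgroup G} {T : Finset G} (hT : Subgroup.IsComplement (H : Set G) T) {f : G → M}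
    (hf : ∀ h ∈ H, ∀ x, f (h * x) = f x) (g : G) : ∑ x ∈ T, f (x * g) = ∑ x ∈ T, f x := by
  set r : G → G := fun x => (hT.equiv x).2
  have hr_mem (x : G) : r x ∈ T := (hT.equiv x).2.2
  have hf_r (x : G) : f (r x) = f x := by
    conv_rhs => rw [← hT.equiv_fst_mul_equiv_snd x]
    exact (hf _ (hT.equiv x).1.2 _).symm
  -- `r x` is the representative in `T` of the coset `H x`, so `x ↦ r (x g)` permutes `T`.
  have hr_r {x : G} (hx : x ∈ T) (k : G) : r (r (x * k) * k⁻¹) = x := by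
    have hdecomp : r (x * k) * k⁻¹ = ((hT.equiv (x * k)).1 : G)⁻¹ * x := by
      simp only [r, hT.equiv_snd_eq_inv_mul, mul_assoc, mul_inv_cancel, mul_one]
    simp only [hdecomp, r, hT.equiv_mul_left_of_mem (inv_mem (hT.equiv (x * k)).1.2),
      hT.equiv_snd_eq_self_of_mem_of_one_mem H.one_mem (Finset.mem_coe.mpr hx)]
  refine Finset.sum_nbij' (fun x => r (x * g)) (fun x => r (x * g⁻¹))
    (fun x _ => hr_mem _) (fun x _ => hr_mem _) (fun x hx => hr_r hx g)
    (fun x hx => by simpa using hr_r hx g⁻¹) (fun x _ => (hf_r _).symm)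

section Pairing

variable {Γ : Subgroup SL2Z} {w : ℕ} {Rt : Finset SL2Z}

lemma pairG_sub_left (X Y Q : SL2Z → ℂ[X]) :
    pairG Γ w Rt (X - Y) Q = pairG Γ w Rt X Q - pairG Γ w Rt Y Q := by
  simp only [pairG, Pi.sub_apply, ← mul_sub, ← Finset.sum_sub_distrib, ← pairVBilin_apply,
    map_sub, LinearMap.sub_apply]

lemma pairG_add_right (X Q R : SL2Z → ℂ[X]) :
    pairG Γ w Rt X (Q + R) = pairG Γ w Rt X Q + pairG Γ w Rt X R := by
  simp only [pairG, Pi.add_apply, ← mul_add, ← Finset.sum_add_distrib, ← pairVBilin_apply,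
    map_add]

lemma pairG_neg_right (X Q : SL2Z → ℂ[X]) : pairG Γ w Rt X (-Q) = -pairG Γ w Rt X Q := by
  simp only [pairG, Pi.neg_apply, ← mul_neg, ← Finset.sum_neg_distrib, ← pairVBilin_apply,
    map_neg]

theorem pairG_famSlash (hRt : IsTransversal Γ Rt) {X Y : SL2Z → ℂ[X]} (hX : MemV Γ w X)
    (hY : MemV Γ w Y) (g : SL2Z) :
    pairG Γ w Rt (famSlash w X g) (famSlash w Y g) = pairG Γ w Rt X Y := by
  simp only [pairG, famSlash, pairV_pSlash w (hX.natDegree_le _) (hY.natDegree_le _)]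
  congr 1
  exact hRt.sum_mul_right (f := fun A => pairV w (X A) (Y A))
    (fun γ hγ A => by simp only [hX.inv γ hγ, hY.inv γ hγ]) g⁻¹

lemma pairG_famSlash_left (hRt : IsTransversal Γ Rt) {X Y : SL2Z → ℂ[X]} (hX : MemV Γ w X)
    (hY : MemV Γ w Y) (g : SL2Z) :
    pairG Γ w Rt (famSlash w X g) Y = pairG Γ w Rt X (famSlash w Y g⁻¹) := by
  rw [← pairG_famSlash hRt hX (hY.famSlash g⁻¹) g, famSlash_famSlash hY.natDegree_le,
    inv_mul_cancel, famSlash_one hY.natDegree_le]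

end Pairing

lemma Sm_mul_Sm : Sm * Sm = -1 := by decide

lemma Um_mul_Um : Um * Um = Sm * Tm⁻¹ := by decide

lemma Um_mul_Sm_inv : Um * Sm⁻¹ = Tm := mul_inv_cancel_right Tm Sm

section PeriodPolynomials

variable {Γ : Subgroup SL2Z} {w : ℕ} {Rt : Finset SL2Z} {P Q : SL2Z → ℂ[X]}

lemma MemW.famSlash_Sm (hQ : MemW Γ w Q) : famSlash w Q Sm = -Q :=
  funext fun A => eq_neg_of_add_eq_zero_right (hQ.2.1 A)

lemma MemW.famSlash_Tm_inv (hQ : MemW Γ w Q) : famSlash w Q Tm⁻¹ = Q + famSlash w Q Um := by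
  have hUU : famSlash w Q (Um * Um) = -famSlash w Q Tm⁻¹ := by
    rw [Um_mul_Um, ← famSlash_famSlash hQ.1.natDegree_le, hQ.famSlash_Sm, famSlash_neg]
  funext A
  have hA := hQ.2.2 A
  rw [hUU, Pi.neg_apply] at hA
  rw [Pi.add_apply]
  linear_combination -hA

lemma pairG_famSlash_Sm_left_of_memW (hRt : IsTransversal Γ Rt) (hP : MemV Γ w P)
    (hQ : MemW Γ w Q) : pairG Γ w Rt (famSlash w P Sm) Q = -pairG Γ w Rt P Q := by
  conv_lhs => rw [← neg_neg Q, ← hQ.famSlash_Sm]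
  rw [pairG_neg_right, pairG_famSlash hRt hP hQ.1]

lemma pairG_famSlash_Sm_famSlash_Um (hRt : IsTransversal Γ Rt) (hP : MemV Γ w P)
    (hPT : famSlash w P Tm = P) (hQ : MemV Γ w Q) :
    pairG Γ w Rt (famSlash w P Sm) (famSlash w Q Um) = pairG Γ w Rt P Q := by
  rw [Um, ← famSlash_famSlash hQ.natDegree_le, pairG_famSlash hRt hP (hQ.famSlash Tm)]
  conv_lhs => rw [← hPT]
  exact pairG_famSlash hRt hP hQ Tm

lemma pairG_famSlash_Sm_famSlash_Tm (hRt : IsTransversal Γ Rt) (hP : MemV Γ w P)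
    (hQ : MemV Γ w Q) :
    pairG Γ w Rt (famSlash w P Sm) (famSlash w Q Tm) = pairG Γ w Rt P (famSlash w Q Um) := by
  rw [← Um_mul_Sm_inv, ← famSlash_famSlash hQ.natDegree_le,
    ← pairG_famSlash_left hRt (hP.famSlash Sm) (hQ.famSlash Um), famSlash_famSlash hP.natDegree_le,
    Sm_mul_Sm, famSlash_neg_one hP]

lemma pairG_famSlash_Um_eq_zero (hRt : IsTransversal Γ Rt) (hP : MemV Γ w P)
    (hPT : famSlash w P Tm = P) (hQ : MemW Γ w Q) : pairG Γ w Rt P (famSlash w Q Um) = 0 := by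
  have h := congrArg (pairG Γ w Rt P) hQ.famSlash_Tm_inv
  rw [pairG_add_right, ← pairG_famSlash_left hRt hP hQ.1, hPT] at h
  linear_combination -h

end PeriodPolynomials

theorem statement7 (Γ : Subgroup SL2Z) (w : ℕ)
    (Rt : Finset SL2Z) (hRt : IsTransversal Γ Rt)
    (P Q : SL2Z → Polynomial ℂ) (hP : MemV Γ w P) (hPT : ∀ A, famSlash w P Tm A = P A)
    (hQ : MemW Γ w Q) :
    brk Γ w Rt (fun A => P A - famSlash w P Sm A) Q = 0 := by
  replace hPT : famSlash w P Tm = P := funext hPT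
  have hPT_inv : famSlash w P Tm⁻¹ = P := by
    conv_lhs => rw [← hPT]
    exact famSlash_famSlash_inv hP.natDegree_le Tm
  have hPS := hP.famSlash Sm
  calc brk Γ w Rt (fun A => P A - famSlash w P Sm A) Q
      = pairG Γ w Rt (famSlash w (famSlash w P Sm) Tm⁻¹) Q -
          pairG Γ w Rt (famSlash w (famSlash w P Sm) Tm) Q := by
        change pairG Γ w Rt (famSlash w (P - famSlash w P Sm) Tm -
          famSlash w (P - famSlash w P Sm) Tm⁻¹) Q = _
        rw [famSlash_sub, famSlash_sub, hPT, hPT_inv, sub_sub_sub_cancel_left, pairG_sub_left]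
    _ = pairG Γ w Rt (famSlash w P Sm) (famSlash w Q Tm) -
          pairG Γ w Rt (famSlash w P Sm) (famSlash w Q Tm⁻¹) := by
        rw [pairG_famSlash_left hRt hPS hQ.1, pairG_famSlash_left hRt hPS hQ.1, inv_inv]
    _ = pairG Γ w Rt P (famSlash w Q Um) - (pairG Γ w Rt (famSlash w P Sm) Q +
          pairG Γ w Rt (famSlash w P Sm) (famSlash w Q Um)) := by
        rw [pairG_famSlash_Sm_famSlash_Tm hRt hP hQ.1, hQ.famSlash_Tm_inv, pairG_add_right]
    _ = 0 := by
        rw [pairG_famSlash_Um_eq_zero hRt hP hPT hQ, pairG_famSlash_Sm_left_of_memW hRt hP hQ,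
          pairG_famSlash_Sm_famSlash_Um hRt hP hPT hQ.1]
        ring
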